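/- Let E be the matrix of matrix units over U(gl_n), q ∈ ℂ∖{0}, and define m^{(r)}_{ij} := (𝒫_r^q(E))_{ij} where 𝒫_r^q(x) = ∏_{k=0}^{r-1}(1 − x q^k). Then for all r,s ≥ 1 and indices i,j,k,l: (q^{-r} − q^{-s})[m^{(r)}_{ij}, m^{(s)}_{kl}] + q^{-s}[m^{(r)}_{ij}, m^{(s+1)}_{kl}] − q^{-r}[m^{(r+1)}_{ij}, m^{(s)}_{kl}] = m^{(r)}_{kj} m^{(s)}_{il} − m^{(s)}_{kj} m^{(r)}_{il}. -/

import Mathlib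

open Polynomial

/-!
Call a matrix `M` over `A` covariant (for `E`) if `[E_{ij}, M_{kl}] = δ_{jk} M_{il} − δ_{li} M_{kj}`.
The hypothesis says `E` is covariant, covariance is stable under sums, scalars and products, so every
`f(E)` is covariant. The identity
`[((xf)(E))_{ij}, g(E)_{kl}] − [f(E)_{ij}, ((xg)(E))_{kl}] = f(E)_{kj} g(E)_{il} − g(E)_{kj} f(E)_{il}`
is linear in `f`; for `f = 1` it is the covariance of `g(E)`, and it passes from `f` to `xf` by
expanding `((x²f)(E))_{ij} = ∑ₘ E_{im} ((xf)(E))_{mj}` and commuting `E_{im}` past the other factors.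
The theorem is the case `f = 𝒫_r^q`, `g = 𝒫_s^q`, since `x 𝒫_t^q = q^{-t} (𝒫_t^q − 𝒫_{t+1}^q)`.
-/

namespace Ring

variable {A : Type*} [Ring A]

theorem mul_lie (a b c : A) : ⁅a * b, c⁆ = a * ⁅b, c⁆ + ⁅a, c⁆ * b := by
  simp only [lie_def]; noncomm_ring

theorem lie_mul (a b c : A) : ⁅a, b * c⁆ = ⁅a, b⁆ * c + b * ⁅a, c⁆ := by
  simp only [lie_def]; noncomm_ring

theorem lie_sum {α : Type*} (a : A) (s : Finset α) (f : α → A) :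
    ⁅a, ∑ x ∈ s, f x⁆ = ∑ x ∈ s, ⁅a, f x⁆ := by
  simp only [lie_def, Finset.mul_sum, Finset.sum_mul, Finset.sum_sub_distrib]

theorem sum_lie {α : Type*} (s : Finset α) (f : α → A) (a : A) :
    ⁅∑ x ∈ s, f x, a⁆ = ∑ x ∈ s, ⁅f x, a⁆ := by
  simp only [lie_def, Finset.mul_sum, Finset.sum_mul, Finset.sum_sub_distrib]

end Ring

section ShiftCommRel

variable {ι A : Type*} [Fintype ι] [Ring A] {E M M' N : Matrix ι ι A}

/-- For `M = f(E)`, `N = g(E)` this is the identity of the header, `E * M` playing `(xf)(E)`. -/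
def ShiftCommRel (E M N : Matrix ι ι A) : Prop :=
  ∀ i j k l, ⁅(E * M) i j, N k l⁆ - ⁅M i j, (E * N) k l⁆ = M k j * N i l - N k j * M i l

theorem ShiftCommRel.add (h : ShiftCommRel E M N) (h' : ShiftCommRel E M' N) :
    ShiftCommRel E (M + M') N := by
  intro i j k l
  have h₁ := h i j k l
  have h₂ := h' i j k l
  simp only [Ring.lie_def, Matrix.mul_add, Matrix.add_apply] at h₁ h₂ ⊢
  linear_combination (norm := noncomm_ring) h₁ + h₂

theorem ShiftCommRel.smul {R : Type*} [CommRing R] [Algebra R A] (h : ShiftCommRel E M N)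
    (c : R) : ShiftCommRel E (c • M) N := by
  intro i j k l
  have h₁ := congrArg (c • ·) (h i j k l)
  simp only [Ring.lie_def, Matrix.smul_apply, mul_smul_comm, smul_mul_assoc, smul_sub] at h₁ ⊢
  exact h₁

end ShiftCommRel

section Covariance

variable {ι A : Type*} [DecidableEq ι] [Ring A] {E M M' N : Matrix ι ι A}

def IsGlCovariant (E M : Matrix ι ι A) : Prop :=
  ∀ i j k l, ⁅E i j, M k l⁆ = (if j = k then M i l else 0) - (if l = i then M k j else 0)

theorem isGlCovariant_one (E : Matrix ι ι A) : IsGlCovariant E 1 := by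
  intro i j k l
  simp only [Matrix.one_apply, Ring.lie_def]
  split_ifs <;> subst_vars <;> simp_all

theorem IsGlCovariant.add (hM : IsGlCovariant E M) (hM' : IsGlCovariant E M') :
    IsGlCovariant E (M + M') := by
  intro i j k l
  have h := hM i j k l
  have h' := hM' i j k l
  simp only [Ring.lie_def, Matrix.add_apply] at h h' ⊢
  split_ifs at h h' ⊢ <;> linear_combination (norm := noncomm_ring) h + h'

theorem IsGlCovariant.smul {R : Type*} [CommRing R] [Algebra R A] (hM : IsGlCovariant E M)
    (c : R) : IsGlCovariant E (c • M) := by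
  intro i j k l
  have h := congrArg (c • ·) (hM i j k l)
  simp only [Ring.lie_def, Matrix.smul_apply, mul_smul_comm, smul_mul_assoc, smul_sub,
    smul_ite, smul_zero] at h ⊢
  exact h

variable [Fintype ι]

theorem IsGlCovariant.mul (hM : IsGlCovariant E M) (hN : IsGlCovariant E N) :
    IsGlCovariant E (M * N) := by
  intro i j k l
  simp only [Matrix.mul_apply, Ring.lie_sum, Ring.lie_mul, hM i j, hN i j, sub_mul, mul_sub,
    ite_mul, mul_ite, zero_mul, mul_zero, Finset.sum_add_distrib, Finset.sum_sub_distrib,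
    Finset.sum_ite_eq, Finset.sum_ite_eq', Finset.mem_univ, if_true, Finset.sum_ite_irrel,
    Finset.sum_const_zero]
  abel

theorem isGlCovariant_aeval {R : Type*} [CommRing R] [Algebra R A] (hE : IsGlCovariant E E)
    (f : R[X]) : IsGlCovariant E (aeval E f) := by
  induction f using Polynomial.induction_on with
  | C a => simpa [Algebra.algebraMap_eq_smul_one] using (isGlCovariant_one E).smul a
  | add f g hf hg => simpa only [map_add] using hf.add hg
  | monomial k a ih =>
    rw [pow_succ, ← mul_assoc, map_mul, aeval_X]
    exact ih.mul hE

theorem IsGlCovariant.sum_lie_mul (hN : IsGlCovariant E N) (M : Matrix ι ι A) (i j k l : ι) :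
    ∑ m, ⁅E i m, N k l⁆ * M m j = N i l * M k j - if l = i then (N * M) k j else 0 := by
  simp only [hN i, sub_mul, ite_mul, zero_mul, Finset.sum_sub_distrib, Finset.sum_ite_eq',
    Finset.mem_univ, if_true, Finset.sum_ite_irrel, Finset.sum_const_zero, Matrix.mul_apply]

theorem IsGlCovariant.sum_mul_mul (hM : IsGlCovariant E M) (N : Matrix ι ι A) (i j k l : ι) :
    ∑ m, E i m * M k j * N m l =
      M k j * (E * N) i l + M i j * N k l - if j = i then (M * N) k l else 0 := by
  have hswap : ∀ m, E i m * M k j = M k j * E i m + ⁅E i m, M k j⁆ := fun m => by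
    rw [Ring.lie_def]; abel
  simp only [hswap, hM i, add_mul, sub_mul, ite_mul, zero_mul, mul_assoc, Finset.sum_add_distrib,
    Finset.sum_sub_distrib, Finset.sum_ite_eq', Finset.mem_univ, if_true, Finset.sum_ite_irrel,
    Finset.sum_const_zero, Matrix.mul_apply, Finset.mul_sum, ← add_sub_assoc]

theorem shiftCommRel_one (hN : IsGlCovariant E N) : ShiftCommRel E 1 N := by
  intro i j k l
  have h := hN i j k l
  simp only [Matrix.mul_one, Matrix.one_apply, Ring.lie_def] at h ⊢
  split_ifs at h ⊢ <;> subst_vars <;> simp_all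

theorem ShiftCommRel.mul_left (hE : IsGlCovariant E E) (hM : IsGlCovariant E M)
    (hN : IsGlCovariant E N) (hMN : Commute M N) (hEN : Commute E N) (h : ShiftCommRel E M N) :
    ShiftCommRel E (E * M) N := by
  intro i j k l
  have expand : ∀ P Q : Matrix ι ι A,
      ⁅(E * P) i j, Q k l⁆ = ∑ m, (E i m * ⁅P m j, Q k l⁆ + ⁅E i m, Q k l⁆ * P m j) := by
    intro P Q
    simp only [Matrix.mul_apply, Ring.sum_lie, Ring.mul_lie]
  have hNEM : N * (E * M) = E * N * M := by rw [← mul_assoc, hEN.eq]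
  have h_swapped := h k j i l
  rw [expand (E * M) N, expand M (E * N)]
  calc _ = ∑ m, E i m * (⁅(E * M) m j, N k l⁆ - ⁅M m j, (E * N) k l⁆)
        + ∑ m, ⁅E i m, N k l⁆ * (E * M) m j - ∑ m, ⁅E i m, (E * N) k l⁆ * M m j := by
        simp only [mul_sub, Finset.sum_add_distrib, Finset.sum_sub_distrib]; abel
    _ = (∑ m, E i m * M k j * N m l - ∑ m, E i m * N k j * M m l)
        + (N i l * (E * M) k j - if l = i then (N * (E * M)) k j else 0)
        - ((E * N) i l * M k j - if l = i then (E * N * M) k j else 0) := by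
        simp only [h _ j k l, mul_sub, Finset.sum_sub_distrib, ← mul_assoc, hN.sum_lie_mul,
          (hE.mul hN).sum_lie_mul]
    _ = (M k j * (E * N) i l + M i j * N k l - (if j = i then (M * N) k l else 0)
          - (N k j * (E * M) i l + N i j * M k l - if j = i then (N * M) k l else 0))
        + (N i l * (E * M) k j - if l = i then (E * N * M) k j else 0)
        - ((E * N) i l * M k j - if l = i then (E * N * M) k j else 0) := by
        rw [hM.sum_mul_mul, hN.sum_mul_mul, hNEM]
    _ = _ := by
        rw [hMN.eq]
        simp only [Ring.lie_def] at h_swapped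
        linear_combination (norm := noncomm_ring) -h_swapped

theorem shiftCommRel_aeval {R : Type*} [CommRing R] [Algebra R A] (hE : IsGlCovariant E E)
    (f g : R[X]) : ShiftCommRel E (aeval E f) (aeval E g) := by
  have hg := isGlCovariant_aeval hE g
  induction f using Polynomial.induction_on with
  | C a => simpa [Algebra.algebraMap_eq_smul_one] using (shiftCommRel_one hg).smul a
  | add f f' hf hf' => simpa only [map_add] using hf.add hf'
  | monomial k a ih =>
    rw [pow_succ', mul_left_comm, map_mul, aeval_X]
    exact ih.mul_left hE (isGlCovariant_aeval hE _) hg ((Commute.all _ _).map (aeval E))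
      (by simpa using (Commute.all X g).map (aeval E))

end Covariance

theorem X_mul_prod_range_one_sub_X_mul_C {K : Type*} [Field K] {q : K} (hq : q ≠ 0) (t : ℕ) :
    X * ∏ k ∈ Finset.range t, (1 - X * C (q ^ k)) =
      C (q ^ t)⁻¹ * (∏ k ∈ Finset.range t, (1 - X * C (q ^ k))
        - ∏ k ∈ Finset.range (t + 1), (1 - X * C (q ^ k))) := by
  have hC : C (q ^ t)⁻¹ * C (q ^ t) = 1 := by
    rw [← C_mul, inv_mul_cancel₀ (pow_ne_zero t hq), C_1]
  rw [Finset.prod_range_succ]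
  linear_combination (-(X * ∏ k ∈ Finset.range t, (1 - X * C (q ^ k)))) * hC

theorem stmt_13_general {A : Type*} [Ring A] [Algebra ℂ A] {n : ℕ}
    (E : Matrix (Fin n) (Fin n) A)
    (hE : ∀ i j k l : Fin n,
      E i j * E k l - E k l * E i j =
        (if j = k then E i l else 0) - (if l = i then E k j else 0))
    (q : ℂ) (hq : q ≠ 0)
    (m : ℕ → Fin n → Fin n → A)
    (hm : ∀ r i j,
      m r i j = (aeval E (∏ k ∈ Finset.range r, (1 - X * C (q ^ k)))) i j)
    (r s : ℕ) (i j k l : Fin n) :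
    ((q ^ r)⁻¹ - (q ^ s)⁻¹) • (m r i j * m s k l - m s k l * m r i j)
      + (q ^ s)⁻¹ • (m r i j * m (s + 1) k l - m (s + 1) k l * m r i j)
      - (q ^ r)⁻¹ • (m (r + 1) i j * m s k l - m s k l * m (r + 1) i j)
      = m r k j * m s i l - m s k j * m r i l := by
  have hE_mul : ∀ t x y, (E * aeval E (∏ k ∈ Finset.range t, (1 - X * C (q ^ k)))) x y =
      (q ^ t)⁻¹ • (m t x y - m (t + 1) x y) := by
    intro t x y
    have h := congrArg (fun P => aeval E P x y) (X_mul_prod_range_one_sub_X_mul_C hq t)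
    simpa only [map_mul, aeval_X, aeval_C, map_sub, ← Algebra.smul_def, Matrix.smul_apply,
      Matrix.sub_apply, ← hm] using h
  have key := shiftCommRel_aeval hE (∏ k ∈ Finset.range r, (1 - X * C (q ^ k)))
    (∏ k ∈ Finset.range s, (1 - X * C (q ^ k))) i j k l
  rw [hE_mul, hE_mul] at key
  simp only [← hm, Ring.lie_def] at key
  rw [← key]
  simp only [smul_mul_assoc, mul_smul_comm, smul_sub, sub_smul, sub_mul, mul_sub]
  module

/-- with `E` the matrix of matrix units over `U(gl_n)`, `q ≠ 0`,
and `m^{(r)}_{ij} := (𝒫_r^q(E))_{ij}` where `𝒫_r^q(x) = ∏_{k=0}^{r-1}(1 − x q^k)`,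
for all `r, s ≥ 1`:
`(q^{-r} − q^{-s})[m^{(r)}_{ij}, m^{(s)}_{kl}] + q^{-s}[m^{(r)}_{ij}, m^{(s+1)}_{kl}]
  − q^{-r}[m^{(r+1)}_{ij}, m^{(s)}_{kl}] = m^{(r)}_{kj} m^{(s)}_{il} − m^{(s)}_{kj} m^{(r)}_{il}`. -/
theorem stmt_13 {A : Type*} [Ring A] [Algebra ℂ A] {n : ℕ}
    (E : Matrix (Fin n) (Fin n) A)
    (hE : ∀ i j k l : Fin n,
      E i j * E k l - E k l * E i j =
        (if j = k then E i l else 0) - (if l = i then E k j else 0))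
    (q : ℂ) (hq : q ≠ 0)
    (m : ℕ → Fin n → Fin n → A)
    (hm : ∀ r i j,
      m r i j = (aeval E (∏ k ∈ Finset.range r, (1 - X * C (q ^ k)))) i j)
    (r s : ℕ) (hr : 1 ≤ r) (hs : 1 ≤ s) (i j k l : Fin n) :
    ((q ^ r)⁻¹ - (q ^ s)⁻¹) • (m r i j * m s k l - m s k l * m r i j)
      + (q ^ s)⁻¹ • (m r i j * m (s + 1) k l - m (s + 1) k l * m r i j)
      - (q ^ r)⁻¹ • (m (r + 1) i j * m s k l - m s k l * m (r + 1) i j)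
      = m r k j * m s i l - m s k j * m r i l :=
  stmt_13_general E hE q hq m hm r s i j k l
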